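/- arXiv:2303.01751 — 4 statements merged into one kernel-verified Lean document; each statement's English description precedes it below -/
import Mathlib

section
/- Let E be a finite-dimensional real inner product space, g : ℝ → ℝ a function, and φ : ℝ × E × E → ℝ twice continuously differentiable. Suppose φ satisfies the phase-space Hamilton–Jacobi–Bellman equation: for all (t, x, v), ∂φ/∂t(t,x,v) = −(1/2)·g(t)²·‖∇_v φ(t,x,v)‖² − ⟪v, ∇_x φ(t,x,v)⟫ − (1/2)·g(t)²·Δ_v φ(t,x,v). Then the Hopf–Cole transform Ψ(t,x,v) := exp(φ(t,x,v)) satisfies, for all (t,x,v), the linear backward Kolmogorov-type equation ∂Ψ/∂t(t,x,v) = −(1/2)·g(t)²·Δ_v Ψ(t,x,v) − ⟪∇_x Ψ(t,x,v), v⟫. -/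
open scoped Gradient RealInnerProductSpace

/-- The Laplacian of `f : E → ℝ` at `x`: the trace of the second derivative, computed as the sum
of the second derivative evaluated along an orthonormal basis. -/
noncomputable def laplacian {E : Type*} [NormedAddCommGroup E] [InnerProductSpace ℝ E]
    [FiniteDimensional ℝ E] (f : E → ℝ) (x : E) : ℝ :=
  ∑ i, iteratedFDeriv ℝ 2 f x ![stdOrthonormalBasis ℝ E i, stdOrthonormalBasis ℝ E i]

/-! For `Ψ = exp φ` one has `∂ₜΨ = Ψ ∂ₜφ`, `∇ₓΨ = Ψ ∇ₓφ` and `Δᵥ Ψ = Ψ (Δᵥ φ + ‖∇ᵥ φ‖²)`.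
Substituting the HJB equation for `∂ₜφ`, the quadratic term `‖∇ᵥ φ‖²` it contains cancels exactly
against the one produced by the Laplacian of the exponential, leaving an equation linear in `Ψ`. -/

open Real

theorem iteratedFDeriv_two_exp_comp_apply {E : Type*} [NormedAddCommGroup E] [NormedSpace ℝ E]
    {f : E → ℝ} {v : E} (hf : ContDiffAt ℝ 2 f v) (u : E) :
    iteratedFDeriv ℝ 2 (fun w => exp (f w)) v ![u, u]
      = exp (f v) * (iteratedFDeriv ℝ 2 f v ![u, u] + fderiv ℝ f v u ^ 2) := by
  have hdiff : ∀ᶠ w in nhds v, DifferentiableAt ℝ f w :=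
    (hf.eventually (by simp)).mono fun w hw => hw.differentiableAt two_ne_zero
  have hfderiv : fderiv ℝ (fun w => exp (f w)) =ᶠ[nhds v] fun w => exp (f w) • fderiv ℝ f w :=
    hdiff.mono fun w hw => hw.hasFDerivAt.exp.fderiv
  have hsecond : HasFDerivAt (fun w => exp (f w) • fderiv ℝ f w)
      (exp (f v) • fderiv ℝ (fderiv ℝ f) v
        + (exp (f v) • fderiv ℝ f v).smulRight (fderiv ℝ f v)) v :=
    (hf.differentiableAt two_ne_zero).hasFDerivAt.exp.smul
      ((hf.fderiv_right (m := 1) (by norm_num)).differentiableAt one_ne_zero).hasFDerivAt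
  rw [iteratedFDeriv_two_apply, iteratedFDeriv_two_apply, hfderiv.fderiv_eq, hsecond.fderiv]
  simp only [Matrix.cons_val_zero, Matrix.cons_val_one, add_apply,
    smul_apply, ContinuousLinearMap.smulRight_apply, smul_eq_mul]
  ring

section

variable {E : Type*} [NormedAddCommGroup E] [InnerProductSpace ℝ E] {f : E → ℝ} {v : E}

theorem gradient_exp_comp [CompleteSpace E] (hf : DifferentiableAt ℝ f v) :
    ∇ (fun w => exp (f w)) v = exp (f v) • ∇ f v := by
  rw [gradient, hf.hasFDerivAt.exp.fderiv, map_smul, gradient]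

theorem norm_sq_gradient_eq_sum [CompleteSpace E] {ι : Type*} [Fintype ι] (b : OrthonormalBasis ι ℝ E) :
    ‖∇ f v‖ ^ 2 = ∑ i, fderiv ℝ f v (b i) ^ 2 := by
  rw [← b.sum_sq_norm_inner_left]
  simp only [Real.norm_eq_abs, sq_abs, inner_gradient_left]

theorem laplacian_exp_comp [FiniteDimensional ℝ E] (hf : ContDiffAt ℝ 2 f v) :
    laplacian (fun w => exp (f w)) v = exp (f v) * (laplacian f v + ‖∇ f v‖ ^ 2) := by
  simp only [laplacian, iteratedFDeriv_two_exp_comp_apply hf,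
    norm_sq_gradient_eq_sum (stdOrthonormalBasis ℝ E), ← Finset.sum_add_distrib, Finset.mul_sum]

end

/-- Hopf–Cole transform: if `φ` solves the phase-space HJB equation, then `Ψ = exp φ`
solves the linear backward Kolmogorov-type equation. -/
theorem hopf_cole_exp {E : Type*} [NormedAddCommGroup E]
    [InnerProductSpace ℝ E] [FiniteDimensional ℝ E]
    (g : ℝ → ℝ) (φ : ℝ → E → E → ℝ)
    (hφ : ContDiff ℝ 2 fun p : ℝ × E × E => φ p.1 p.2.1 p.2.2)
    (hHJB : ∀ (t : ℝ) (x v : E),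
      deriv (fun s => φ s x v) t
        = -(1/2) * g t ^ 2 * ‖∇ (fun w => φ t x w) v‖ ^ 2
          - ⟪v, ∇ (fun y => φ t y v) x⟫
          - (1/2) * g t ^ 2 * laplacian (fun w => φ t x w) v) :
    ∀ (t : ℝ) (x v : E),
      deriv (fun s => Real.exp (φ s x v)) t
        = -(1/2) * g t ^ 2 * laplacian (fun w => Real.exp (φ t x w)) v
          - ⟪∇ (fun y => Real.exp (φ t y v)) x, v⟫ := by
  intro t x v
  have ht : ContDiff ℝ 2 (fun s => φ s x v) := hφ.comp (f := fun s => (s, x, v)) (by fun_prop)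
  have hx : ContDiff ℝ 2 (fun y => φ t y v) := hφ.comp (f := fun y => (t, y, v)) (by fun_prop)
  have hv : ContDiff ℝ 2 (fun w => φ t x w) := hφ.comp (f := fun w => (t, x, w)) (by fun_prop)
  rw [(ht.differentiable two_ne_zero t).hasDerivAt.exp.deriv, hHJB,
    laplacian_exp_comp hv.contDiffAt, gradient_exp_comp (hx.differentiable two_ne_zero x),
    real_inner_smul_left, real_inner_comm]
  ring
end

section
/- Let E be a finite-dimensional real inner product space, g : ℝ → ℝ a function, and φ, μ : ℝ × E × E → ℝ twice continuously differentiable. Suppose φ satisfies the phase-space Hamilton–Jacobi–Bellman equation ∂φ/∂t = −(1/2)·g(t)²·‖∇_v φ‖² − ⟪v, ∇_x φ⟫ − (1/2)·g(t)²·Δ_v φ, and μ satisfies the phase-space Fokker–Planck equation ∂μ/∂t = −⟪v, ∇_x μ⟫ − g(t)²·(⟪∇_v μ, ∇_v φ⟫ + μ·Δ_v φ) + (1/2)·g(t)²·Δ_v μ (all equations holding at every (t,x,v)). Then the Hopf–Cole transform Ψ̂(t,x,v) := μ(t,x,v)·exp(−φ(t,x,v)) satisfies, for all (t,x,v), ∂Ψ̂/∂t(t,x,v)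 = (1/2)·g(t)²·Δ_v Ψ̂(t,x,v) − ⟪∇_x Ψ̂(t,x,v), v⟫. -/
/-!
Write `Ψ̂ = μ e^{-φ}`. The product rule gives `∂ₜΨ̂ = (∂ₜμ - μ ∂ₜφ) e^{-φ}`,
`∇Ψ̂ = (∇μ - μ ∇φ) e^{-φ}` and `ΔΨ̂ = (Δμ - 2⟪∇μ, ∇φ⟫ - μ Δφ + μ ‖∇φ‖²) e^{-φ}`.
After substituting the two equations for `∂ₜμ` and `∂ₜφ`, the nonlinear term `‖∇ᵥφ‖²` of the
Hamilton–Jacobi–Bellman equation is matched by the `μ ‖∇ᵥφ‖²` term of `ΔᵥΨ̂`, and the remaining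
terms cancel pairwise.
-/

open scoped Gradient RealInnerProductSpace

section Slices

variable {𝕜 : Type*} [NontriviallyNormedField 𝕜]
  {E₁ E₂ E₃ F : Type*} [NormedAddCommGroup E₁] [NormedSpace 𝕜 E₁] [NormedAddCommGroup E₂]
  [NormedSpace 𝕜 E₂] [NormedAddCommGroup E₃] [NormedSpace 𝕜 E₃] [NormedAddCommGroup F]
  [NormedSpace 𝕜 F] {n : WithTop ℕ∞} {f : E₁ → E₂ → E₃ → F}

theorem ContDiff.uncurry₃_slice₁ (hf : ContDiff 𝕜 n fun p : E₁ × E₂ × E₃ => f p.1 p.2.1 p.2.2)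
    (y : E₂) (z : E₃) : ContDiff 𝕜 n fun x => f x y z :=
  hf.comp (contDiff_id.prodMk (contDiff_const (c := (y, z))))

theorem ContDiff.uncurry₃_slice₂ (hf : ContDiff 𝕜 n fun p : E₁ × E₂ × E₃ => f p.1 p.2.1 p.2.2)
    (x : E₁) (z : E₃) : ContDiff 𝕜 n fun y => f x y z :=
  hf.comp (contDiff_const.prodMk (contDiff_id.prodMk contDiff_const))

theorem ContDiff.uncurry₃_slice₃ (hf : ContDiff 𝕜 n fun p : E₁ × E₂ × E₃ => f p.1 p.2.1 p.2.2)
    (x : E₁) (y : E₂) : ContDiff 𝕜 n fun z => f x y z :=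
  hf.comp (contDiff_const.prodMk (contDiff_const.prodMk contDiff_id))

end Slices

section ProductWithExp

variable {E : Type*} [NormedAddCommGroup E] [NormedSpace ℝ E] {a b : E → ℝ}

theorem fderiv_mul_exp_neg_apply {x : E} (ha : DifferentiableAt ℝ a x)
    (hb : DifferentiableAt ℝ b x) (u : E) :
    fderiv ℝ (fun y => a y * Real.exp (-b y)) x u
      = (fderiv ℝ a x u - a x * fderiv ℝ b x u) * Real.exp (-b x) := by
  have h : HasFDerivAt (fun y => a y * Real.exp (-b y)) _ x :=
    ha.hasFDerivAt.mul hb.hasFDerivAt.neg.exp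
  rw [h.fderiv]
  simp only [add_apply, smul_apply, neg_apply, Pi.neg_apply, smul_eq_mul]
  ring

theorem deriv_mul_exp_neg {p q : ℝ → ℝ} {t : ℝ} (hp : DifferentiableAt ℝ p t)
    (hq : DifferentiableAt ℝ q t) :
    deriv (fun s => p s * Real.exp (-q s)) t
      = (deriv p t - p t * deriv q t) * Real.exp (-q t) :=
  fderiv_mul_exp_neg_apply hp hq 1

theorem fderiv_fderiv_apply_apply_eq_fderiv_fderiv_apply {F : Type*} [NormedAddCommGroup F]
    [NormedSpace ℝ F] {f : E → F} {x : E} (hf : DifferentiableAt ℝ (fderiv ℝ f) x) (u' u : E) :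
    fderiv ℝ (fderiv ℝ f) x u' u = fderiv ℝ (fun y => fderiv ℝ f y u) x u' := by
  rw [fderiv_clm_apply hf (differentiableAt_const u)]
  simp

theorem fderiv_fderiv_mul_exp_neg_apply (ha : ContDiff ℝ 2 a) (hb : ContDiff ℝ 2 b) (x u : E) :
    fderiv ℝ (fderiv ℝ fun y => a y * Real.exp (-b y)) x u u
      = (fderiv ℝ (fderiv ℝ a) x u u - 2 * fderiv ℝ a x u * fderiv ℝ b x u
          - a x * fderiv ℝ (fderiv ℝ b) x u u + a x * fderiv ℝ b x u ^ 2) * Real.exp (-b x) := by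
  have hda := ha.differentiable two_ne_zero
  have hdb := hb.differentiable two_ne_zero
  have hda' := (ha.fderiv_right (m := 1) le_rfl).differentiable one_ne_zero
  have hdb' := (hb.fderiv_right (m := 1) le_rfl).differentiable one_ne_zero
  have hd : Differentiable ℝ (fderiv ℝ fun y => a y * Real.exp (-b y)) :=
    ((ha.mul (Real.contDiff_exp.comp hb.neg)).fderiv_right (m := 1) le_rfl).differentiable
      one_ne_zero
  -- The directional derivative along `u` again has the shape `c e^{-b}`, so the first-order
  -- product rule applies a second time.
  have hfirst : (fun y => fderiv ℝ (fun z => a z * Real.exp (-b z)) y u)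
      = fun y => (fderiv ℝ a y u - a y * fderiv ℝ b y u) * Real.exp (-b y) :=
    funext fun y => fderiv_mul_exp_neg_apply (hda y) (hdb y) u
  have hdau : Differentiable ℝ fun y => fderiv ℝ a y u :=
    fun y => (hda' y).clm_apply (differentiableAt_const u)
  have hdbu : Differentiable ℝ fun y => fderiv ℝ b y u :=
    fun y => (hdb' y).clm_apply (differentiableAt_const u)
  have hc : HasFDerivAt (fun y => fderiv ℝ a y u - a y * fderiv ℝ b y u) _ x :=
    (hdau x).hasFDerivAt.sub ((hda x).hasFDerivAt.mul (hdbu x).hasFDerivAt)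
  rw [fderiv_fderiv_apply_apply_eq_fderiv_fderiv_apply (hd x), hfirst,
    fderiv_mul_exp_neg_apply hc.differentiableAt (hdb x), hc.fderiv,
    fderiv_fderiv_apply_apply_eq_fderiv_fderiv_apply (hda' x),
    fderiv_fderiv_apply_apply_eq_fderiv_fderiv_apply (hdb' x)]
  simp only [sub_apply, add_apply, smul_apply, smul_eq_mul]
  ring

end ProductWithExp

section Laplacian

variable {E : Type*} [NormedAddCommGroup E] [InnerProductSpace ℝ E] [FiniteDimensional ℝ E]

theorem laplacian_eq_sum_fderiv_fderiv (f : E → ℝ) (x : E) :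
    laplacian f x = ∑ i, fderiv ℝ (fderiv ℝ f) x (stdOrthonormalBasis ℝ E i)
      (stdOrthonormalBasis ℝ E i) := by
  simp only [laplacian, iteratedFDeriv_two_apply, Matrix.cons_val_zero, Matrix.cons_val_one]

theorem inner_gradient_gradient_eq_sum (a b : E → ℝ) (x : E) :
    ⟪∇ a x, ∇ b x⟫ = ∑ i, fderiv ℝ a x (stdOrthonormalBasis ℝ E i)
      * fderiv ℝ b x (stdOrthonormalBasis ℝ E i) := by
  rw [← (stdOrthonormalBasis ℝ E).sum_inner_mul_inner]
  simp only [inner_gradient_left, real_inner_comm (∇ b x)]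

theorem laplacian_mul_exp_neg {a b : E → ℝ} (ha : ContDiff ℝ 2 a) (hb : ContDiff ℝ 2 b) (x : E) :
    laplacian (fun y => a y * Real.exp (-b y)) x
      = (laplacian a x - 2 * ⟪∇ a x, ∇ b x⟫ - a x * laplacian b x
          + a x * ‖∇ b x‖ ^ 2) * Real.exp (-b x) := by
  simp only [laplacian_eq_sum_fderiv_fderiv, ← real_inner_self_eq_norm_sq,
    inner_gradient_gradient_eq_sum, fderiv_fderiv_mul_exp_neg_apply ha hb, Finset.mul_sum,
    ← Finset.sum_mul, ← Finset.sum_sub_distrib, ← Finset.sum_add_distrib]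
  exact congrArg (· * _) (Finset.sum_congr rfl fun i _ => by ring)

theorem inner_gradient_mul_exp_neg {a b : E → ℝ} {x : E} (ha : DifferentiableAt ℝ a x)
    (hb : DifferentiableAt ℝ b x) (u : E) :
    ⟪∇ (fun y => a y * Real.exp (-b y)) x, u⟫
      = (⟪∇ a x, u⟫ - a x * ⟪∇ b x, u⟫) * Real.exp (-b x) := by
  simp only [inner_gradient_left]
  exact fderiv_mul_exp_neg_apply ha hb u

end Laplacian

/-- Hopf–Cole transform: if `φ` solves the phase-space HJB equation and `μ` the corresponding
Fokker–Planck equation, then `Ψ̂ = μ·exp(−φ)` solves the linear forward Kolmogorov-type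
equation. -/
theorem hopf_cole_mul_exp_neg {E : Type*} [NormedAddCommGroup E]
    [InnerProductSpace ℝ E] [FiniteDimensional ℝ E]
    (g : ℝ → ℝ) (φ μ : ℝ → E → E → ℝ)
    (hφ : ContDiff ℝ 2 fun p : ℝ × E × E => φ p.1 p.2.1 p.2.2)
    (hμ : ContDiff ℝ 2 fun p : ℝ × E × E => μ p.1 p.2.1 p.2.2)
    (hHJB : ∀ (t : ℝ) (x v : E),
      deriv (fun s => φ s x v) t
        = -(1/2) * g t ^ 2 * ‖∇ (fun w => φ t x w) v‖ ^ 2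
          - ⟪v, ∇ (fun y => φ t y v) x⟫
          - (1/2) * g t ^ 2 * laplacian (fun w => φ t x w) v)
    (hFPE : ∀ (t : ℝ) (x v : E),
      deriv (fun s => μ s x v) t
        = -⟪v, ∇ (fun y => μ t y v) x⟫
          - g t ^ 2 * (⟪∇ (fun w => μ t x w) v, ∇ (fun w => φ t x w) v⟫
              + μ t x v * laplacian (fun w => φ t x w) v)
          + (1/2) * g t ^ 2 * laplacian (fun w => μ t x w) v) :
    ∀ (t : ℝ) (x v : E),
      deriv (fun s => μ s x v * Real.exp (-φ s x v)) t
        = (1/2) * g t ^ 2 * laplacian (fun w => μ t x w * Real.exp (-φ t x w)) v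
          - ⟪∇ (fun y => μ t y v * Real.exp (-φ t y v)) x, v⟫ := by
  intro t x v
  rw [deriv_mul_exp_neg ((hμ.uncurry₃_slice₁ x v).differentiable two_ne_zero t)
      ((hφ.uncurry₃_slice₁ x v).differentiable two_ne_zero t),
    laplacian_mul_exp_neg (hμ.uncurry₃_slice₃ t x) (hφ.uncurry₃_slice₃ t x),
    inner_gradient_mul_exp_neg ((hμ.uncurry₃_slice₂ t v).differentiable two_ne_zero x)
      ((hφ.uncurry₃_slice₂ t v).differentiable two_ne_zero x),
    hHJB, hFPE, real_inner_comm v, real_inner_comm v]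
  ring
end

section
/- Let E be a finite-dimensional real inner product space, g : ℝ → ℝ a function, and Ψ, Ψ̂ : ℝ × E × E → ℝ twice continuously differentiable, satisfying for all (t,x,v) the coupled linear PDEs ∂Ψ/∂t = −(1/2)·g(t)²·Δ_v Ψ − ⟪∇_x Ψ, v⟫ and ∂Ψ̂/∂t = (1/2)·g(t)²·Δ_v Ψ̂ − ⟪∇_x Ψ̂, v⟫. Then the product p(t,x,v) := Ψ(t,x,v)·Ψ̂(t,x,v) satisfies, for all (t,x,v), the Fokker–Planck-type equation ∂p/∂t = −⟪v, ∇_x p⟫ − g(t)²·(⟪∇_v Ψ̂, ∇_v Ψ⟫ + Ψ̂·Δ_v Ψ) + (1/2)·g(t)²·Δ_v p, where the middle term is the v-divergence of the vector field Ψ̂·∇_vΨ (equal to p·∇_v log Ψ when Ψ > 0). -/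
open scoped Gradient RealInnerProductSpace

/-!
Expanding `∂ₜ(ΨΨ̂) = (∂ₜΨ)Ψ̂ + Ψ(∂ₜΨ̂)` with the two PDEs, the transport terms recombine into
`-⟪v, ∇ₓ(ΨΨ̂)⟫` by the product rule for the gradient, while the diffusion terms
`½g²(Ψ Δᵥ Ψ̂ - Ψ̂ Δᵥ Ψ)` are rewritten with the product rule for the Laplacian,
`Δ(ΨΨ̂) = Ψ̂ ΔΨ + Ψ ΔΨ̂ + 2⟪∇Ψ, ∇Ψ̂⟫`.
-/

section SecondDerivative

variable {𝕜 E : Type*} [NontriviallyNormedField 𝕜] [NormedAddCommGroup E] [NormedSpace 𝕜 E]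
  {f g : E → 𝕜} {x : E}

theorem ContDiffAt.iteratedFDeriv_two_mul_apply (hf : ContDiffAt 𝕜 2 f x)
    (hg : ContDiffAt 𝕜 2 g x) (e₀ e₁ : E) :
    iteratedFDeriv 𝕜 2 (fun y => f y * g y) x ![e₀, e₁]
      = g x * iteratedFDeriv 𝕜 2 f x ![e₀, e₁] + f x * iteratedFDeriv 𝕜 2 g x ![e₀, e₁]
        + fderiv 𝕜 f x e₀ * fderiv 𝕜 g x e₁ + fderiv 𝕜 g x e₀ * fderiv 𝕜 f x e₁ := by
  have hf' : DifferentiableAt 𝕜 (fderiv 𝕜 f) x :=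
    (hf.fderiv_right (m := 1) le_rfl).differentiableAt one_ne_zero
  have hg' : DifferentiableAt 𝕜 (fderiv 𝕜 g) x :=
    (hg.fderiv_right (m := 1) le_rfl).differentiableAt one_ne_zero
  have h_fderiv : fderiv 𝕜 (fun y => f y * g y) =ᶠ[nhds x]
      f • fderiv 𝕜 g + g • fderiv 𝕜 f := by
    filter_upwards [hf.eventually (by simp), hg.eventually (by simp)] with y hfy hgy
    exact fderiv_fun_mul (hfy.differentiableAt two_ne_zero) (hgy.differentiableAt two_ne_zero)
  have h_second := (((hf.differentiableAt two_ne_zero).hasFDerivAt.smul hg'.hasFDerivAt).add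
    ((hg.differentiableAt two_ne_zero).hasFDerivAt.smul hf'.hasFDerivAt)).fderiv
  simp only [iteratedFDeriv_two_apply, Matrix.cons_val_zero, Matrix.cons_val_one,
    h_fderiv.fderiv_eq, h_second, add_apply, smul_apply, ContinuousLinearMap.smulRight_apply,
    smul_eq_mul]
  ring

end SecondDerivative

section InnerProductSpace

variable {E : Type*} [NormedAddCommGroup E] [InnerProductSpace ℝ E]

theorem gradient_fun_mul [CompleteSpace E] {f g : E → ℝ} {x : E} (hf : DifferentiableAt ℝ f x)
    (hg : DifferentiableAt ℝ g x) :
    ∇ (fun y => f y * g y) x = f x • ∇ g x + g x • ∇ f x := by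
  refine ext_inner_right ℝ fun w => ?_
  simp [inner_add_left, real_inner_smul_left, inner_gradient_left, fderiv_fun_mul hf hg]

theorem OrthonormalBasis.sum_fderiv_mul_fderiv [CompleteSpace E] {ι : Type*} [Fintype ι]
    (b : OrthonormalBasis ι ℝ E) (f g : E → ℝ) (x : E) :
    ∑ i, fderiv ℝ f x (b i) * fderiv ℝ g x (b i) = ⟪∇ f x, ∇ g x⟫ := by
  simp_rw [← inner_gradient_left, real_inner_comm _ (∇ g x)]
  exact b.sum_inner_mul_inner _ _

theorem ContDiffAt.laplacian_mul [FiniteDimensional ℝ E] {f g : E → ℝ} {x : E}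
    (hf : ContDiffAt ℝ 2 f x) (hg : ContDiffAt ℝ 2 g x) :
    laplacian (fun y => f y * g y) x
      = g x * laplacian f x + f x * laplacian g x + 2 * ⟪∇ f x, ∇ g x⟫ := by
  simp only [laplacian, hf.iteratedFDeriv_two_mul_apply hg, Finset.sum_add_distrib,
    ← Finset.mul_sum, ← (stdOrthonormalBasis ℝ E).sum_fderiv_mul_fderiv f g x]
  simp_rw [mul_comm (fderiv ℝ g x _)]
  ring

end InnerProductSpace

/-- The factorized density `p = Ψ·Ψ̂` of the Schrödinger potentials solves the
Fokker–Planck-type equation of the optimal forward SDE. -/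
theorem potentials_product_fokker_planck {E : Type*} [NormedAddCommGroup E]
    [InnerProductSpace ℝ E] [FiniteDimensional ℝ E]
    (g : ℝ → ℝ) (Ψ Ψhat : ℝ → E → E → ℝ)
    (hΨ : ContDiff ℝ 2 fun p : ℝ × E × E => Ψ p.1 p.2.1 p.2.2)
    (hΨhat : ContDiff ℝ 2 fun p : ℝ × E × E => Ψhat p.1 p.2.1 p.2.2)
    (hPDE1 : ∀ (t : ℝ) (x v : E),
      deriv (fun s => Ψ s x v) t
        = -(1/2) * g t ^ 2 * laplacian (fun w => Ψ t x w) v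
          - ⟪∇ (fun y => Ψ t y v) x, v⟫)
    (hPDE2 : ∀ (t : ℝ) (x v : E),
      deriv (fun s => Ψhat s x v) t
        = (1/2) * g t ^ 2 * laplacian (fun w => Ψhat t x w) v
          - ⟪∇ (fun y => Ψhat t y v) x, v⟫) :
    ∀ (t : ℝ) (x v : E),
      deriv (fun s => Ψ s x v * Ψhat s x v) t
        = -⟪v, ∇ (fun y => Ψ t y v * Ψhat t y v) x⟫
          - g t ^ 2 * (⟪∇ (fun w => Ψhat t x w) v, ∇ (fun w => Ψ t x w) v⟫
              + Ψhat t x v * laplacian (fun w => Ψ t x w) v)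
          + (1/2) * g t ^ 2 * laplacian (fun w => Ψ t x w * Ψhat t x w) v := by
  intro t x v
  have hΨt : DifferentiableAt ℝ (fun s => Ψ s x v) t :=
    (hΨ.comp (by fun_prop : ContDiff ℝ 2 fun s : ℝ => (s, x, v))).differentiable two_ne_zero t
  have hΨhatt : DifferentiableAt ℝ (fun s => Ψhat s x v) t :=
    (hΨhat.comp (by fun_prop : ContDiff ℝ 2 fun s : ℝ => (s, x, v))).differentiable two_ne_zero t
  have hΨx : DifferentiableAt ℝ (fun y => Ψ t y v) x :=
    (hΨ.comp (by fun_prop : ContDiff ℝ 2 fun y : E => (t, y, v))).differentiable two_ne_zero x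
  have hΨhatx : DifferentiableAt ℝ (fun y => Ψhat t y v) x :=
    (hΨhat.comp (by fun_prop : ContDiff ℝ 2 fun y : E => (t, y, v))).differentiable two_ne_zero x
  have hΨv : ContDiffAt ℝ 2 (fun w => Ψ t x w) v :=
    (hΨ.comp (by fun_prop : ContDiff ℝ 2 fun w : E => (t, x, w))).contDiffAt
  have hΨhatv : ContDiffAt ℝ 2 (fun w => Ψhat t x w) v :=
    (hΨhat.comp (by fun_prop : ContDiff ℝ 2 fun w : E => (t, x, w))).contDiffAt
  rw [deriv_fun_mul hΨt hΨhatt, hPDE1, hPDE2, gradient_fun_mul hΨx hΨhatx, hΨv.laplacian_mul hΨhatv,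
    inner_add_right, real_inner_smul_right, real_inner_smul_right, real_inner_comm v,
    real_inner_comm v, real_inner_comm (∇ (fun w => Ψhat t x w) v)]
  ring
end

section
/- Let E be a finite-dimensional real inner product space, g : ℝ → ℝ a function, and Ψ̂ : ℝ × E × E → ℝ twice continuously differentiable with Ψ̂(t,x,v) > 0 for all (t,x,v), satisfying the PDE ∂Ψ̂/∂t = (1/2)·g(t)²·Δ_v Ψ̂ − ⟪∇_x Ψ̂, v⟫ at every (t,x,v). Then ŷ := log ∘ Ψ̂ satisfies, for all (t,x,v), ∂ŷ/∂t(t,x,v) = −⟪v, ∇_x ŷ(t,x,v)⟫ + (1/2)·g(t)²·(Δ_v ŷ(t,x,v) + ‖∇_v ŷ(t,x,v)‖²). -/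
/-!
Since `Ψ̂ > 0`, the chain rule gives `∂ₜ log Ψ̂ = ∂ₜΨ̂ / Ψ̂` and `∇ log Ψ̂ = ∇Ψ̂ / Ψ̂`, while the
second-order chain rule `Δ(φ ∘ f) = φ'(f) Δf + φ''(f) ‖∇f‖²` gives
`Δ_v log Ψ̂ = Δ_vΨ̂ / Ψ̂ - ‖∇_vΨ̂‖² / Ψ̂²`. Dividing the PDE for `Ψ̂` by `Ψ̂` and substituting,
the quadratic term `‖∇_v log Ψ̂‖²` is exactly what compensates the `-‖∇_vΨ̂‖² / Ψ̂²`.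
-/

open scoped Gradient RealInnerProductSpace

open Filter Topology

section ChainRule

variable {E : Type*} [NormedAddCommGroup E] [InnerProductSpace ℝ E]
  {f : E → ℝ} {φ φ' : ℝ → ℝ} {x : E} {c : ℝ}

theorem fderiv_fderiv_comp_apply (hφ : ∀ᶠ y in 𝓝 x, HasDerivAt φ (φ' (f y)) (f y))
    (hφ' : HasDerivAt φ' c (f x)) (hf : ContDiffAt ℝ 2 f x) (u : E) :
    fderiv ℝ (fderiv ℝ fun y => φ (f y)) x u u
      = φ' (f x) * fderiv ℝ (fderiv ℝ f) x u u + c * fderiv ℝ f x u ^ 2 := by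
  have hfirst : (fderiv ℝ fun y => φ (f y)) =ᶠ[𝓝 x] fun y => φ' (f y) • fderiv ℝ f y := by
    filter_upwards [hφ, hf.eventually (by simp)] with y hφy hfy
    exact (hφy.comp_hasFDerivAt y (hfy.differentiableAt (by simp)).hasFDerivAt).fderiv
  have hf₁ : DifferentiableAt ℝ f x := hf.differentiableAt (by simp)
  have hf₂ : DifferentiableAt ℝ (fderiv ℝ f) x :=
    (hf.fderiv_right (m := 1) (by norm_num)).differentiableAt one_ne_zero
  rw [hfirst.fderiv_eq, HasFDerivAt.fderiv (f := fun y => φ' (f y) • fderiv ℝ f y)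
    ((hφ'.comp_hasFDerivAt x hf₁.hasFDerivAt).smul hf₂.hasFDerivAt)]
  simp only [Function.comp_apply, add_apply, smul_apply, ContinuousLinearMap.smulRight_apply,
    smul_eq_mul]
  ring

theorem gradient_comp_of_hasDerivAt [CompleteSpace E] (hφ : HasDerivAt φ c (f x))
    (hf : DifferentiableAt ℝ f x) :
    ∇ (fun y => φ (f y)) x = c • ∇ f x := by
  rw [gradient, HasFDerivAt.fderiv (f := fun y => φ (f y)) (hφ.comp_hasFDerivAt x hf.hasFDerivAt),
    map_smulₛₗ, conj_trivial, gradient]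

theorem gradient_log [CompleteSpace E] (hf : DifferentiableAt ℝ f x) (hx : f x ≠ 0) :
    ∇ (fun y => Real.log (f y)) x = (f x)⁻¹ • ∇ f x :=
  gradient_comp_of_hasDerivAt (Real.hasDerivAt_log hx) hf

variable [FiniteDimensional ℝ E]

theorem laplacian_comp (hφ : ∀ᶠ y in 𝓝 x, HasDerivAt φ (φ' (f y)) (f y))
    (hφ' : HasDerivAt φ' c (f x)) (hf : ContDiffAt ℝ 2 f x) :
    laplacian (fun y => φ (f y)) x = φ' (f x) * laplacian f x + c * ‖∇ f x‖ ^ 2 := by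
  simp only [laplacian, iteratedFDeriv_two_apply, Matrix.cons_val_zero, Matrix.cons_val_one,
    fderiv_fderiv_comp_apply hφ hφ' hf, Finset.sum_add_distrib, Finset.mul_sum,
    ← (stdOrthonormalBasis ℝ E).sum_sq_inner_left, inner_gradient_left]

theorem laplacian_log (hf : ContDiffAt ℝ 2 f x) (hx : f x ≠ 0) :
    laplacian (fun y => Real.log (f y)) x
      = (f x)⁻¹ * laplacian f x - (f x ^ 2)⁻¹ * ‖∇ f x‖ ^ 2 := by
  have hlog : ∀ᶠ y in 𝓝 x, HasDerivAt Real.log (f y)⁻¹ (f y) :=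
    (hf.continuousAt.eventually_ne hx).mono fun y hy => Real.hasDerivAt_log hy
  rw [laplacian_comp hlog (hasDerivAt_inv hx) hf, neg_mul, ← sub_eq_add_neg]

end ChainRule

/-- The backward log-potential `ŷ = log Ψ̂` solves the phase-space HJB-type equation. -/
theorem log_potential_backward_pde {E : Type*} [NormedAddCommGroup E]
    [InnerProductSpace ℝ E] [FiniteDimensional ℝ E]
    (g : ℝ → ℝ) (Ψhat : ℝ → E → E → ℝ)
    (hΨhat : ContDiff ℝ 2 fun p : ℝ × E × E => Ψhat p.1 p.2.1 p.2.2)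
    (hΨhatpos : ∀ (t : ℝ) (x v : E), 0 < Ψhat t x v)
    (hPDE : ∀ (t : ℝ) (x v : E),
      deriv (fun s => Ψhat s x v) t
        = (1/2) * g t ^ 2 * laplacian (fun w => Ψhat t x w) v
          - ⟪∇ (fun y => Ψhat t y v) x, v⟫) :
    ∀ (t : ℝ) (x v : E),
      deriv (fun s => Real.log (Ψhat s x v)) t
        = -⟪v, ∇ (fun y => Real.log (Ψhat t y v)) x⟫
          + (1/2) * g t ^ 2 * (laplacian (fun w => Real.log (Ψhat t x w)) v
              + ‖∇ (fun w => Real.log (Ψhat t x w)) v‖ ^ 2) := by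
  intro t x v
  have hpos := hΨhatpos t x v
  have ht : DifferentiableAt ℝ (fun s => Ψhat s x v) t :=
    ((hΨhat.comp (by fun_prop : ContDiff ℝ 2 fun s : ℝ => (s, x, v))).differentiable
      (by simp)) t
  have hx : DifferentiableAt ℝ (fun y => Ψhat t y v) x :=
    ((hΨhat.comp (by fun_prop : ContDiff ℝ 2 fun y : E => (t, y, v))).differentiable
      (by simp)) x
  have hv : ContDiff ℝ 2 (fun w => Ψhat t x w) :=
    hΨhat.comp (by fun_prop : ContDiff ℝ 2 fun w : E => (t, x, w))
  rw [(ht.hasDerivAt.log hpos.ne').deriv, hPDE,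
    gradient_log (f := fun y => Ψhat t y v) hx hpos.ne',
    gradient_log (f := fun w => Ψhat t x w) (hv.differentiable (by simp) v) hpos.ne',
    laplacian_log hv.contDiffAt hpos.ne', norm_smul, real_inner_smul_right, real_inner_comm,
    Real.norm_eq_abs, abs_inv, abs_of_pos hpos]
  field_simp
  ring
end
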